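/- Let A be a finite-dimensional algebra over a field k, S_i a simple A-module with projective cover P_i, and suppose Ext^1_A(S_i, S_i) = 0 and moreover there is no oriented cycle through vertex i in the Ext-quiver of A. Then the endomorphism algebra End_A(P_i) is isomorphic to End_A(S_i), hence is a division algebra. -/

import Mathlib

/-!
Let `K = ker p`. Being superfluous, `K` lies in every maximal submodule of `P`, so every
endomorphism of `P` preserves it and induces an endomorphism of `P/K ≅ S_i`. This gives a ring
homomorphism `End(P) → End(S_i)`, surjective because `P` is projective. If `f ≠ 0` lies in its
kernel, then `im f ⊆ K` and `im f ≅ P/ker f` maps onto `S_i`.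

So it suffices to see that if a module `M` of finite length has simple top `S_a` (a surjection
`M → S_a` with superfluous kernel `K`) and some submodule of `K` maps onto `S_b`, there is a path
`a → ⋯ → b` in the Ext-quiver. Dividing out a submodule of `K` maximal among those meeting that
submodule exactly in the kernel of the map to `S_b`, we may assume that `K` contains a copy of
`S_b` lying in every nonzero submodule of `K`. Either `K` is that copy, and `M` is a non-split
extension of `S_a` by `S_b`; or `K` has a simple quotient `K/K' ≅ S_c` with `S_b ⊆ K'`, `M/K'` is
a non-split extension of `S_a` by `S_c`, and a minimal supplement `V` of `K'` in `K` is a smaller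
module with top `S_c` still containing `S_b` in the kernel of its top.
-/

universe u v

open CategoryTheory

/-- `Ext^1_B(S, T) ≠ 0`: there exists a short exact sequence
`0 → T → E → S → 0` of `B`-modules which does not split. -/
def HasNontrivialExt (B : Type u) [Ring B] (S T : ModuleCat.{v} B) : Prop :=
  ∃ (E : ModuleCat.{v} B) (f : T →ₗ[B] E) (g : E →ₗ[B] S),
    Function.Injective f ∧ Function.Surjective g ∧
      LinearMap.range f = LinearMap.ker g ∧
        ∀ s : S →ₗ[B] E, g ∘ₗ s ≠ LinearMap.id

open LinearMap Submodule Function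

namespace Submodule

variable {R M M' : Type*} [Ring R] [AddCommGroup M] [Module R M] [AddCommGroup M'] [Module R M']

def IsSuperfluous (K : Submodule R M) : Prop :=
  ∀ X : Submodule R M, X ⊔ K = ⊤ → X = ⊤

variable {K : Submodule R M}

theorem IsSuperfluous.map (hK : K.IsSuperfluous) {f : M →ₗ[R] M'} (hf : Surjective f) :
    (K.map f).IsSuperfluous := by
  intro X hX
  have hcomap : X.comap f ⊔ K = ⊤ := by
    refine eq_top_iff.2 fun m _ => ?_
    obtain ⟨x, hx, _, ⟨k, hk, rfl⟩, hxk⟩ := mem_sup.1 (hX ▸ mem_top : f m ∈ X ⊔ K.map f)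
    refine mem_sup.2 ⟨m - k, ?_, k, hk, sub_add_cancel m k⟩
    simpa [mem_comap, map_sub, ← hxk] using hx
  rw [← map_comap_eq_of_surjective hf X, hK _ hcomap, map_top, range_eq_top.2 hf]

theorem IsSuperfluous.le_of_isCoatom (hK : K.IsSuperfluous) {X : Submodule R M}
    (hX : IsCoatom X) : K ≤ X := by
  by_contra h
  exact hX.1 (hK X (hX.2 _ (left_lt_sup.2 h)))

theorem IsSuperfluous.le_ker [IsSimpleModule R M'] (hK : K.IsSuperfluous) (f : M →ₗ[R] M') :
    K ≤ ker f := by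
  rcases f.surjective_or_eq_zero with hf | rfl
  · exact hK.le_of_isCoatom (isCoatom_ker_of_surjective hf)
  · simp

theorem IsSuperfluous.le_ker_of_ne_top [IsSimpleModule R M'] {p : M →ₗ[R] M'}
    (hp : Surjective p) (hK : (ker p).IsSuperfluous) {X : Submodule R M} (hX : X ≠ ⊤) :
    X ≤ ker p := by
  by_contra h
  exact hX (hK X ((isCoatom_ker_of_surjective hp).2 _ (right_lt_sup.2 h)))

theorem IsSuperfluous.ker_eq_bot_of_comp_eq_id {g : M →ₗ[R] M'} (hK : (ker g).IsSuperfluous)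
    {s : M' →ₗ[R] M} (hs : g ∘ₗ s = LinearMap.id) : ker g = ⊥ := by
  have hgs : ∀ y, g (s y) = y := fun y => LinearMap.congr_fun hs y
  have hrange : range s = ⊤ := hK _ <| eq_top_iff.2 fun m _ =>
    mem_sup.2 ⟨s (g m), mem_range_self s _, m - s (g m), by simp [hgs], by abel⟩
  refine eq_bot_iff.2 fun x hx => ?_
  obtain ⟨y, rfl⟩ := range_eq_top.1 hrange x
  rw [mem_ker, hgs] at hx
  simp [hx]

theorem isSuperfluous_comap_subtype {V K' : Submodule R M}
    (hV : ∀ X ≤ V, X ⊔ K' = V ⊔ K' → X = V) : (K'.comap V.subtype).IsSuperfluous := by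
  intro Y hY
  have hmap : Y.map V.subtype ⊔ V ⊓ K' = V := by
    rw [← map_comap_subtype, ← Submodule.map_sup, hY, map_top, range_subtype]
  have hYV : Y.map V.subtype = V := hV _ (map_subtype_le V Y) <| by
    conv_rhs => rw [← hmap]
    rw [sup_assoc, sup_eq_right.2 (inf_le_right : V ⊓ K' ≤ K')]
  exact map_injective_of_injective V.injective_subtype (by rw [hYV, map_top, range_subtype])

theorem exists_supplement [IsArtinian R M] {K' : Submodule R M} (h : K' ≤ K) :
    ∃ V ≤ K, V ⊔ K' = K ∧ (K'.comap V.subtype).IsSuperfluous := by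
  obtain ⟨V, hVK, hV, hVmin⟩ :=
    exists_minimal_le_of_wellFoundedLT (fun V => V ⊔ K' = K) K (sup_eq_left.2 h)
  exact ⟨V, hVK, hV,
    isSuperfluous_comap_subtype fun X hXV hX => hXV.antisymm (hVmin (hX.trans hV) hXV)⟩

theorem ker_mkQ_comp_inclusion {V K' : Submodule R M} (hVK : V ≤ K) :
    ker ((K'.comap K.subtype).mkQ ∘ₗ inclusion hVK) = K'.comap V.subtype := by
  ext x
  simp [Quotient.mk_eq_zero]

theorem surjective_mkQ_comp_inclusion {V K' : Submodule R M} (hVK : V ≤ K) (h : V ⊔ K' = K) :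
    Surjective ((K'.comap K.subtype).mkQ ∘ₗ inclusion hVK) := by
  intro z
  obtain ⟨⟨k, hk⟩, rfl⟩ := mkQ_surjective _ z
  obtain ⟨x, hx, y, hy, rfl⟩ := mem_sup.1 (h.symm ▸ hk : k ∈ V ⊔ K')
  exact ⟨⟨x, hx⟩, by simp [Quotient.eq, hy]⟩

theorem comap_subtype_le_of_ne_bot {N V : Submodule R M} (hVK : V ≤ K)
    (hN : ∀ X ≤ K, X ≠ ⊥ → N ≤ X) {X : Submodule R V} (hX : X ≠ ⊥) : N.comap V.subtype ≤ X := by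
  have hXmap : X.map V.subtype ≠ ⊥ := fun h => hX <| by
    rw [← comap_map_eq_of_injective V.injective_subtype X, h, comap_bot, ker_subtype]
  calc N.comap V.subtype ≤ (X.map V.subtype).comap V.subtype :=
        comap_mono (hN _ ((map_subtype_le V X).trans hVK) hXmap)
    _ = X := comap_map_eq_of_injective V.injective_subtype X

theorem map_mkQ_le_of_maximal {N W C : Submodule R M}
    (hC : Maximal (fun C => C ≤ K ∧ C ⊓ N = W) C) (hN : IsAtom (N.map C.mkQ))
    {X : Submodule R (M ⧸ C)} (hXK : X ≤ K.map C.mkQ) (hX : X ≠ ⊥) : N.map C.mkQ ≤ X := by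
  have hCX : C < X.comap C.mkQ := by
    refine lt_of_le_of_ne (fun c hc => by simp [(Quotient.mk_eq_zero C).2 hc]) fun h => hX ?_
    rw [← map_comap_eq_of_surjective C.mkQ_surjective X, ← h, mkQ_map_self]
  have hXK' : X.comap C.mkQ ≤ K := by
    simpa [comap_map_mkQ, sup_eq_right.2 hC.1.1] using comap_mono (f := C.mkQ) hXK
  have hW : W ≤ X.comap C.mkQ ⊓ N := hC.1.2 ▸ inf_le_inf_right N hCX.le
  obtain ⟨x, ⟨hxX, hxN⟩, hxW⟩ := SetLike.not_le_iff_exists.1 fun h : X.comap C.mkQ ⊓ N ≤ W =>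
    hCX.not_ge (hC.2 ⟨hXK', le_antisymm h hW⟩ hCX.le)
  rw [← hN.not_disjoint_iff_le, disjoint_def]
  refine fun h => hxW ?_
  have hxC : x ∈ C := (Quotient.mk_eq_zero C).1 (h _ (mem_map_of_mem hxN) hxX)
  exact hC.1.2 ▸ ⟨hxC, hxN⟩

end Submodule

theorem Module.Finite.of_isSuperfluous_ker {R M N : Type*} [Ring R] [AddCommGroup M] [Module R M]
    [AddCommGroup N] [Module R N] [IsSimpleModule R N] {p : M →ₗ[R] N} (hp : Surjective p)
    (hK : (ker p).IsSuperfluous) : Module.Finite R M := by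
  have := IsSimpleModule.nontrivial R N
  obtain ⟨y, hy⟩ := exists_ne (0 : N)
  obtain ⟨x, rfl⟩ := hp y
  have hx : span R {x} = ⊤ := by
    by_contra h
    exact hy (hK.le_ker_of_ne_top hp h (mem_span_singleton_self x))
  exact ⟨⟨{x}, by simpa using hx⟩⟩

section Ext

variable {B : Type u} [Ring B]

theorem hasNontrivialExt_of_isSuperfluous {S T E : ModuleCat.{v} B} [Nontrivial T]
    (f : T →ₗ[B] E) (g : E →ₗ[B] S) (hf : Injective f) (hg : Surjective g)
    (hfg : range f = ker g) (hK : (ker g).IsSuperfluous) : HasNontrivialExt B S T := by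
  refine ⟨E, f, g, hf, hg, hfg, fun s hs => ?_⟩
  have hf0 : f = 0 := range_eq_bot.1 (hfg.trans (hK.ker_eq_bot_of_comp_eq_id hs))
  obtain ⟨t, ht⟩ := exists_ne (0 : T)
  exact ht (hf (by simp [hf0]))

theorem hasNontrivialExt_of_covBy {M : Type v} [AddCommGroup M] [Module B M]
    {S T : ModuleCat.{v} B} {q : M →ₗ[B] S} (hq : Surjective q) (hK : (ker q).IsSuperfluous)
    {K' : Submodule B M} (hK' : K' ⋖ ker q) (e : (ker q ⧸ K'.comap (ker q).subtype) ≃ₗ[B] T) :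
    HasNontrivialExt B S T := by
  have := (covBy_iff_quot_is_simple hK'.le).1 hK'
  have := IsSimpleModule.nontrivial B (ker q ⧸ K'.comap (ker q).subtype)
  have : Nontrivial T := e.injective.nontrivial
  have hincl : Injective ((K'.comap (ker q).subtype).mapQ K' (ker q).subtype le_rfl) := by
    rw [← ker_eq_bot, ker_mapQ, mkQ_map_self]
  refine hasNontrivialExt_of_isSuperfluous (E := ModuleCat.of B (M ⧸ K'))
    ((K'.comap (ker q).subtype).mapQ K' (ker q).subtype le_rfl ∘ₗ e.symm.toLinearMap)
    (K'.liftQ q hK'.le) (hincl.comp e.symm.injective) ?_ ?_ ?_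
  · intro y
    obtain ⟨m, hm⟩ := hq y
    exact ⟨K'.mkQ m, hm⟩
  · rw [range_comp, LinearEquiv.range, Submodule.map_top, range_mapQ, range_subtype, ker_liftQ]
  · rw [ker_liftQ]
    exact hK.map K'.mkQ_surjective

end Ext

section ExtQuiver

variable {A : Type u} [Ring A] {ι : Type*} {S : ι → ModuleCat.{v} A}

theorem transGen_of_essential_le_ker (hsimple : ∀ i, IsSimpleModule A (S i))
    (hall : ∀ U : ModuleCat.{v} A, IsSimpleModule A U → ∃ i, Nonempty (U ≃ₗ[A] S i))
    {M : Type v} [AddCommGroup M] [Module A M] [IsArtinian A M] [IsNoetherian A M]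
    {a b : ι} {q : M →ₗ[A] S a} (hq : Surjective q) (hK : (ker q).IsSuperfluous)
    {N : Submodule A M} (hNK : N ≤ ker q) (e : N ≃ₗ[A] S b)
    (hess : ∀ X ≤ ker q, X ≠ ⊥ → N ≤ X) :
    Relation.TransGen (fun a b => HasNontrivialExt A (S a) (S b)) a b := by
  induction hn : Module.length A M using WellFoundedLT.induction generalizing M a q N with
  | ind n ih => ?_
  have := hsimple a
  have := IsSimpleModule.nontrivial A (S b)
  have hN : N ≠ ⊥ := (nontrivial_iff_ne_bot).1 e.symm.injective.nontrivial
  by_cases hNK' : N = ker q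
  · refine .single (hasNontrivialExt_of_isSuperfluous (E := ModuleCat.of A M)
      (N.subtype ∘ₗ e.symm.toLinearMap) q (N.injective_subtype.comp e.symm.injective) hq ?_ hK)
    rw [range_comp, LinearEquiv.range, Submodule.map_top, range_subtype, hNK']
  obtain ⟨K', -, hK'⟩ := exists_le_covBy_of_lt (bot_lt_iff_ne_bot.2 (ne_bot_of_le_ne_bot hN hNK))
  obtain ⟨c, ⟨ec⟩⟩ := hall (ModuleCat.of A _) ((covBy_iff_quot_is_simple hK'.le).1 hK')
  obtain ⟨V, hVK, hV, hVK'⟩ := exists_supplement hK'.le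
  let v : V →ₗ[A] S c := ec.toLinearMap ∘ₗ (K'.comap (ker q).subtype).mkQ ∘ₗ inclusion hVK
  have hkerv : ker v = K'.comap V.subtype := by
    rw [LinearEquiv.ker_comp, ker_mkQ_comp_inclusion]
  have hNK'' : N ≤ K' := hess K' hK'.le fun hK'bot =>
    (hK'bot ▸ hK').2 (bot_lt_iff_ne_bot.2 hN) (hNK.lt_of_ne hNK')
  have hNV : N ≤ V := hess V hVK fun hVbot => hK'.lt.ne (by simpa [hVbot] using hV)
  have hlen : Module.length A V < n :=
    hn ▸ length_lt (ne_top_of_le_ne_top (isCoatom_ker_of_surjective hq).1 hVK)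
  refine .head (hasNontrivialExt_of_covBy hq hK hK' ec) (ih _ hlen (q := v)
    (ec.surjective.comp (surjective_mkQ_comp_inclusion hVK hV)) (hkerv ▸ hVK')
    (N := N.comap V.subtype) (hkerv ▸ comap_mono hNK'') ((comapSubtypeEquivOfLe hNV).trans e)
    (fun X _ hX => comap_subtype_le_of_ne_bot hVK hess hX) rfl)

theorem transGen_of_le_ker (hsimple : ∀ i, IsSimpleModule A (S i))
    (hall : ∀ U : ModuleCat.{v} A, IsSimpleModule A U → ∃ i, Nonempty (U ≃ₗ[A] S i))
    {M : Type v} [AddCommGroup M] [Module A M] [IsArtinian A M] [IsNoetherian A M]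
    {a b : ι} {q : M →ₗ[A] S a} (hq : Surjective q) (hK : (ker q).IsSuperfluous)
    {N : Submodule A M} (hNK : N ≤ ker q) {r : N →ₗ[A] S b} (hr : Surjective r) :
    Relation.TransGen (fun a b => HasNontrivialExt A (S a) (S b)) a b := by
  set W := (ker r).map N.subtype
  obtain ⟨C, -, hC⟩ := exists_maximal_ge_of_wellFoundedGT (fun C => C ≤ ker q ∧ C ⊓ N = W) W
    ⟨(map_subtype_le _ _).trans hNK, inf_eq_left.2 (map_subtype_le _ _)⟩
  have hker : ker (C.mkQ.submoduleMap N) = ker r := by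
    ext x
    have hxC : (x : M) ∈ C ↔ (x : M) ∈ W := by simp [← hC.1.2]
    simpa [W, ← Subtype.val_inj (a := C.mkQ.submoduleMap N x), Quotient.mk_eq_zero] using hxC
  let e : N.map C.mkQ ≃ₗ[A] S b :=
    ((C.mkQ.submoduleMap N).quotKerEquivOfSurjective (C.mkQ.submoduleMap_surjective N)).symm ≪≫ₗ
      quotEquivOfEq _ _ hker ≪≫ₗ r.quotKerEquivOfSurjective hr
  have hatom : IsAtom (N.map C.mkQ) := isSimpleModule_iff_isAtom.1 ((hsimple b).congr e)
  refine transGen_of_essential_le_ker hsimple hall (q := C.liftQ q hC.1.1) ?_ ?_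
    (N := N.map C.mkQ) ?_ e ?_
  · intro y
    obtain ⟨m, hm⟩ := hq y
    exact ⟨C.mkQ m, hm⟩
  · rw [ker_liftQ]
    exact hK.map C.mkQ_surjective
  · rw [ker_liftQ]
    exact map_mono hNK
  · intro X hX hXbot
    rw [ker_liftQ] at hX
    exact map_mkQ_le_of_maximal hC hatom hX hXbot

end ExtQuiver

namespace LinearMap

variable {R M N : Type*} [Ring R] [AddCommGroup M] [Module R M] [AddCommGroup N] [Module R N]
  {p : M →ₗ[R] N} (hp : Surjective p)

noncomputable def descendEnd (f : Module.End R M) (hf : ker p ≤ ker (p ∘ₗ f)) : Module.End R N :=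
  (ker p).liftQ (p ∘ₗ f) hf ∘ₗ (p.quotKerEquivOfSurjective hp).symm.toLinearMap

theorem descendEnd_comp (f : Module.End R M) (hf : ker p ≤ ker (p ∘ₗ f)) :
    descendEnd hp f hf ∘ₗ p = p ∘ₗ f := by
  ext x
  have : (p.quotKerEquivOfSurjective hp).symm (p x) = Submodule.Quotient.mk x :=
    (LinearEquiv.symm_apply_eq _).2 rfl
  simp [descendEnd, this]

variable (hinv : ∀ f : Module.End R M, ker p ≤ ker (p ∘ₗ f))

noncomputable def endRingHom : Module.End R M →+* Module.End R N where
  toFun f := descendEnd hp f (hinv f)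
  map_one' := (cancel_right hp).1 <| by rw [descendEnd_comp]; rfl
  map_mul' f g := (cancel_right hp).1 <| by
    rw [descendEnd_comp, Module.End.mul_eq_comp, Module.End.mul_eq_comp, comp_assoc,
      descendEnd_comp, ← comp_assoc, ← comp_assoc, descendEnd_comp]
  map_zero' := (cancel_right hp).1 <| by rw [descendEnd_comp]; simp
  map_add' f g := (cancel_right hp).1 <| by
    rw [add_comp, descendEnd_comp, descendEnd_comp, descendEnd_comp, comp_add]

theorem endRingHom_comp (f : Module.End R M) : endRingHom hp hinv f ∘ₗ p = p ∘ₗ f :=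
  descendEnd_comp hp f (hinv f)

theorem endRingHom_surjective [Module.Projective R M] : Surjective (endRingHom hp hinv) := by
  intro g
  obtain ⟨f, hf⟩ := Module.projective_lifting_property p (g ∘ₗ p) hp
  exact ⟨f, (cancel_right hp).1 (by rw [endRingHom_comp, hf])⟩

end LinearMap

theorem end_projCover_iso_end_simple_general (k : Type u) (A : Type u) [Field k] [Ring A]
    [Algebra k A] [FiniteDimensional k A] (ι : Type) (S : ι → ModuleCat.{v} A)
    (hsimple : ∀ i, IsSimpleModule A (S i))
    (hall : ∀ U : ModuleCat.{v} A, IsSimpleModule A U → ∃ i, Nonempty (U ≃ₗ[A] S i))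
    (i : ι) (P : ModuleCat.{v} A) (hP : Module.Projective A P) (p : P →ₗ[A] S i)
    (hsurj : Function.Surjective p)
    (hsmall : ∀ N : Submodule A P, N ⊔ LinearMap.ker p = ⊤ → N = ⊤)
    (hnocycle : ¬ Relation.TransGen (fun a b => HasNontrivialExt A (S a) (S b)) i i) :
    Nonempty (Module.End A P ≃+* Module.End A (S i)) ∧
      ∀ f : Module.End A P, f = 0 ∨ IsUnit f := by
  have := hsimple i
  have hK : (ker p).IsSuperfluous := hsmall
  have := Module.Finite.of_isSuperfluous_ker hsurj hK
  have : IsArtinianRing A := isArtinian_of_tower k inferInstance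
  have : IsNoetherianRing A := isNoetherian_of_tower k inferInstance
  have hinv : ∀ f : Module.End A P, ker p ≤ ker (p ∘ₗ f) := fun f => hK.le_ker _
  let Φ := endRingHom hsurj hinv
  have hΦ : ∀ f, Φ f = 0 → f = 0 := by
    intro f hf
    by_contra hf0
    have hpf : p ∘ₗ f = 0 := by rw [← endRingHom_comp hsurj hinv, hf, zero_comp]
    have hkerf : ker f ≤ ker p := hK.le_ker_of_ne_top hsurj (mt ker_eq_top.1 hf0)
    have hr : Surjective ((ker f).liftQ p hkerf ∘ₗ f.quotKerEquivRange.symm.toLinearMap) :=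
      range_eq_top.1 (by rw [range_comp, LinearEquiv.range, Submodule.map_top, range_liftQ,
        range_eq_top.2 hsurj])
    exact hnocycle (transGen_of_le_ker hsimple hall hsurj hK (range_le_ker_iff.2 hpf) hr)
  let Ψ := RingEquiv.ofBijective Φ
    ⟨(injective_iff_map_eq_zero Φ).2 hΦ, endRingHom_surjective hsurj hinv⟩
  refine ⟨⟨Ψ⟩, fun f => or_iff_not_imp_left.2 fun hf => ?_⟩
  have hΨf : IsUnit (Ψ f) :=
    (Module.End.isUnit_iff _).2 (bijective_of_ne_zero fun h => hf (hΦ f h))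
  exact (MulEquiv.isUnit_map Ψ).1 hΨf

/-- Let `A` be a finite-dimensional algebra over a field `k`, `S i` a simple module
with projective cover `P` (a projective module with a surjection `p : P → S i` whose
kernel is superfluous). If `Ext^1_A(S i, S i) = 0` and there is no oriented cycle
through the vertex `i` in the Ext-quiver, then `End_A(P)` is isomorphic to
`End_A(S i)` as a ring, and hence is a division algebra (every nonzero endomorphism
is invertible). -/
theorem end_projCover_iso_end_simple (k : Type u) (A : Type u) [Field k] [Ring A]
    [Algebra k A] [FiniteDimensional k A] (ι : Type) [Fintype ι] (S : ι → ModuleCat.{v} A)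
    (hsimple : ∀ i, IsSimpleModule A (S i))
    (hpairwise : ∀ i j, i ≠ j → IsEmpty (S i ≃ₗ[A] S j))
    (hall : ∀ U : ModuleCat.{v} A, IsSimpleModule A U → ∃ i, Nonempty (U ≃ₗ[A] S i))
    (i : ι) (P : ModuleCat.{v} A) (hP : Module.Projective A P) (p : P →ₗ[A] S i)
    (hsurj : Function.Surjective p)
    (hsmall : ∀ N : Submodule A P, N ⊔ LinearMap.ker p = ⊤ → N = ⊤)
    (hext : ¬ HasNontrivialExt A (S i) (S i))
    (hnocycle : ¬ Relation.TransGen (fun a b => HasNontrivialExt A (S a) (S b)) i i) :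
    Nonempty (Module.End A P ≃+* Module.End A (S i)) ∧
      ∀ f : Module.End A P, f = 0 ∨ IsUnit f :=
  end_projCover_iso_end_simple_general k A ι S hsimple hall i P hP p hsurj hsmall hnocycle
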